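/- Let X be a nonempty set, H a real Hilbert space, τ > 0, and κ : X → H a map with ‖κ(y)‖ = τ for all y ∈ X. Fix x ∈ X, a sequence of design points v : ℕ → X, and noise variances λ : ℕ → ℝ with λ(ℓ) > 0; apply the Gaussian-process posterior setup with ξ := κ(x) and φ(ℓ) := κ(v(ℓ)), producing uⁿ ∈ H. Then there exists a function k∞ : X → ℝ such that the functions y ↦ ⟨κ(y), uⁿ⟩ converge to k∞ uniformly on X as n → ∞. (This is the abstract form of the proposition that for a stationary prior covariance k⁰(x,y) = ⟨κ(x),κ(y)⟩, the posterior covariances kⁿ(x,y) = ⟨κ(y), uⁿ⟩ converge uniformly in y, irrespective of the allocation of design points.) -/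

import Mathlib

open Matrix Filter
open scoped RealInnerProductSpace

variable {H : Type*} [NormedAddCommGroup H] [InnerProductSpace ℝ H]

/-- The Gram matrix `Gₙ` with entries `⟪φ i, φ j⟫ + λ i · δᵢⱼ`. -/
noncomputable def gramMat (φ : ℕ → H) (lam : ℕ → ℝ) (n : ℕ) :
    Matrix (Fin n) (Fin n) ℝ :=
  Matrix.of fun i j : Fin n => ⟪φ i, φ j⟫ + if i = j then lam i else 0

/-- The posterior vector `uⁿ := ξ − Σ_{i<n} wⁿᵢ · φ i` where `wⁿ := Gₙ⁻¹ kₙ`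
and `kₙ = (⟪φ i, ξ⟫)_{i<n}`; in particular `u⁰ = ξ`. -/
noncomputable def postVec (ξ : H) (φ : ℕ → H) (lam : ℕ → ℝ) (n : ℕ) : H :=
  ξ - ∑ i : Fin n,
    (((gramMat φ lam n)⁻¹ *ᵥ fun i : Fin n => ⟪φ i, ξ⟫) i) • φ i

/-!
The posterior vector `uⁿ` is the residual `ξ - ∑_{i<n} wⁿᵢ φ i` of the minimizer `wⁿ` of the
ridge functional `c ↦ ‖ξ - ∑_{i<n} cᵢ φ i‖² + ∑_{i<n} λᵢ cᵢ²`, because `Gₙ wⁿ = kₙ` are its normal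
equations. Hence the minimal values `Jₙ` decrease in `n`, and Pythagoras for this quadratic
functional gives `‖uⁿ - uᵐ‖² ≤ Jₙ - Jₘ` for `n ≤ m`, so `(uⁿ)` is Cauchy. Since `‖κ y‖` is bounded,
the functions `y ↦ ⟪κ y, uⁿ⟫` are then uniformly Cauchy, and they converge uniformly because `ℝ`
is complete.
-/

open Finset

theorem cauchySeq_of_dist_sq_le_sub {α : Type*} [PseudoMetricSpace α] {u : ℕ → α} {J : ℕ → ℝ}
    (hJ : BddBelow (Set.range J)) (h : ∀ n m, n ≤ m → dist (u n) (u m) ^ 2 ≤ J n - J m) :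
    CauchySeq u := by
  have hanti : Antitone J := fun n m hnm => by
    linarith [h n m hnm, sq_nonneg (dist (u n) (u m))]
  refine cauchySeq_of_le_tendsto_0' (fun n => √(J n - ⨅ k, J k)) (fun n m hnm => ?_) ?_
  · exact (le_abs_self _).trans <|
      Real.abs_le_sqrt <| (h n m hnm).trans (by linarith [ciInf_le hJ m])
  · simpa using ((tendsto_atTop_ciInf hanti hJ).sub_const (⨅ k, J k)).sqrt

theorem exists_tendstoUniformly_inner_of_cauchySeq {X : Type*} {κ : X → H} {C : ℝ}
    (hκ : ∀ y, ‖κ y‖ ≤ C) {u : ℕ → H} (hu : CauchySeq u) :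
    ∃ f : X → ℝ, TendstoUniformly (fun n y => ⟪κ y, u n⟫) f atTop := by
  have hF : UniformCauchySeqOn (fun n y => ⟪κ y, u n⟫) atTop Set.univ := by
    refine Metric.uniformCauchySeqOn_iff.mpr fun ε hε => ?_
    obtain ⟨N, hN⟩ := Metric.cauchySeq_iff.mp hu (ε / (|C| + 1)) (by positivity)
    refine ⟨N, fun m hm n hn y _ => ?_⟩
    calc dist ⟪κ y, u m⟫ ⟪κ y, u n⟫ = |⟪κ y, u m - u n⟫| := by
          rw [Real.dist_eq, inner_sub_right]
      _ ≤ ‖κ y‖ * ‖u m - u n‖ := abs_real_inner_le_norm _ _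
      _ ≤ (|C| + 1) * dist (u m) (u n) := by
          rw [dist_eq_norm]
          gcongr
          linarith [hκ y, le_abs_self C]
      _ < (|C| + 1) * (ε / (|C| + 1)) := by gcongr; exact hN m hm n hn
      _ = ε := by field_simp
  choose f hf using fun y => cauchySeq_tendsto_of_complete (hF.cauchySeq (Set.mem_univ y))
  exact ⟨f, tendstoUniformlyOn_univ.mp (hF.tendstoUniformlyOn_of_tendsto fun y _ => hf y)⟩

theorem gramMat_eq_gram_add_diagonal (φ : ℕ → H) (lam : ℕ → ℝ) (n : ℕ) :
    gramMat φ lam n = gram ℝ (fun i : Fin n => φ i) + diagonal fun i : Fin n => lam i := by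
  ext i j
  by_cases h : i = j <;> simp [gramMat, diagonal, h]

theorem gramMat_posDef {lam : ℕ → ℝ} (hlam : ∀ ℓ, 0 < lam ℓ) (φ : ℕ → H) (n : ℕ) :
    (gramMat φ lam n).PosDef := by
  rw [gramMat_eq_gram_add_diagonal]
  exact PosDef.posSemidef_add (posSemidef_gram ℝ _) (posDef_diagonal_iff.mpr fun i => hlam i)

theorem gram_mulVec_apply {n : ℕ} (v : Fin n → H) (c : Fin n → ℝ) (i : Fin n) :
    (gram ℝ v *ᵥ c) i = ⟪v i, ∑ j, c j • v j⟫ := by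
  simp [mulVec, dotProduct, inner_sum, real_inner_smul_right, mul_comm]

section Posterior

variable (ξ : H) (φ : ℕ → H) (lam : ℕ → ℝ)

/-- The weights `wⁿ`, extended by zero to all of `ℕ`. -/
noncomputable def postWeight (n : ℕ) : ℕ → ℝ := fun i =>
  if h : i < n then ((gramMat φ lam n)⁻¹ *ᵥ fun i : Fin n => ⟪φ i, ξ⟫) ⟨i, h⟩ else 0

def ridgeLoss (m : ℕ) (c : ℕ → ℝ) : ℝ :=
  ‖ξ - ∑ i ∈ range m, c i • φ i‖ ^ 2 + ∑ i ∈ range m, lam i * c i ^ 2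

variable {ξ φ lam}

theorem postWeight_eq_zero_of_le {n i : ℕ} (h : n ≤ i) : postWeight ξ φ lam n i = 0 :=
  dif_neg h.not_gt

theorem postVec_eq_sub_sum_range {n m : ℕ} (hnm : n ≤ m) :
    postVec ξ φ lam n = ξ - ∑ i ∈ range m, postWeight ξ φ lam n i • φ i := by
  rw [← sum_subset (range_subset_range.2 hnm) fun i _ hi => by
    rw [postWeight_eq_zero_of_le (by simpa using hi), zero_smul], ← Fin.sum_univ_eq_sum_range]
  simp [postVec, postWeight]

theorem inner_postVec_of_lt (hlam : ∀ ℓ, 0 < lam ℓ) {n i : ℕ} (hi : i < n) :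
    ⟪φ i, postVec ξ φ lam n⟫ = lam i * postWeight ξ φ lam n i := by
  set w := (gramMat φ lam n)⁻¹ *ᵥ fun i : Fin n => ⟪φ i, ξ⟫
  have hw : gramMat φ lam n *ᵥ w = fun i : Fin n => ⟪φ i, ξ⟫ := by
    rw [mulVec_mulVec, mul_nonsing_inv _ (gramMat_posDef hlam φ n).det_pos.ne'.isUnit,
      one_mulVec]
  have hwi := congrFun hw ⟨i, hi⟩
  rw [gramMat_eq_gram_add_diagonal, add_mulVec, Pi.add_apply, gram_mulVec_apply,
    mulVec_diagonal] at hwi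
  simp only [postVec, postWeight, hi, dif_pos, inner_sub_right, ← hwi]
  ring

theorem ridgeLoss_nonneg (hlam : ∀ ℓ, 0 ≤ lam ℓ) (m : ℕ) (c : ℕ → ℝ) :
    0 ≤ ridgeLoss ξ φ lam m c :=
  add_nonneg (sq_nonneg _) (sum_nonneg fun i _ => mul_nonneg (hlam i) (sq_nonneg _))

theorem ridgeLoss_eq_of_le {n m : ℕ} (hnm : n ≤ m) {c : ℕ → ℝ} (hc : ∀ i, n ≤ i → c i = 0) :
    ridgeLoss ξ φ lam m c = ridgeLoss ξ φ lam n c := by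
  have hsub := range_subset_range.2 hnm
  have hvan : ∀ i ∉ range n, c i = 0 := fun i hi => hc i (by simpa using hi)
  unfold ridgeLoss
  rw [← sum_subset hsub fun i _ hi => by rw [hvan i hi, zero_smul],
    ← sum_subset hsub fun i _ hi => by rw [hvan i hi]; ring]

theorem ridgeLoss_eq_add (hlam : ∀ ℓ, 0 < lam ℓ) (m : ℕ) (c : ℕ → ℝ) :
    ridgeLoss ξ φ lam m c = ridgeLoss ξ φ lam m (postWeight ξ φ lam m)
      + ‖∑ i ∈ range m, (c i - postWeight ξ φ lam m i) • φ i‖ ^ 2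
      + ∑ i ∈ range m, lam i * (c i - postWeight ξ φ lam m i) ^ 2 := by
  set w := postWeight ξ φ lam m
  set s := ∑ i ∈ range m, (c i - w i) • φ i
  have hu : ξ - ∑ i ∈ range m, w i • φ i = postVec ξ φ lam m :=
    (postVec_eq_sub_sum_range le_rfl).symm
  have hres : ξ - ∑ i ∈ range m, c i • φ i = postVec ξ φ lam m - s := by
    rw [← hu]
    simp only [s, sub_smul, sum_sub_distrib]
    abel
  have hsu : ⟪s, postVec ξ φ lam m⟫ = ∑ i ∈ range m, (c i - w i) * (lam i * w i) := by
    simp only [s, sum_inner, real_inner_smul_left]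
    exact sum_congr rfl fun i hi => by rw [inner_postVec_of_lt hlam (by simpa using hi)]
  have hlam_sum : ∀ i, lam i * c i ^ 2
      = lam i * w i ^ 2 + 2 * ((c i - w i) * (lam i * w i)) + lam i * (c i - w i) ^ 2 :=
    fun i => by ring
  unfold ridgeLoss
  rw [hres, hu, norm_sub_sq_real, real_inner_comm, hsu, sum_congr rfl fun i _ => hlam_sum i,
    sum_add_distrib, sum_add_distrib, ← mul_sum]
  ring

theorem norm_postVec_sub_sq_le (hlam : ∀ ℓ, 0 < lam ℓ) {n m : ℕ} (hnm : n ≤ m) :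
    ‖postVec ξ φ lam n - postVec ξ φ lam m‖ ^ 2 ≤
      ridgeLoss ξ φ lam n (postWeight ξ φ lam n) - ridgeLoss ξ φ lam m (postWeight ξ φ lam m) := by
  have h := ridgeLoss_eq_add (ξ := ξ) (φ := φ) hlam m (postWeight ξ φ lam n)
  have hn : ridgeLoss ξ φ lam m (postWeight ξ φ lam n)
      = ridgeLoss ξ φ lam n (postWeight ξ φ lam n) :=
    ridgeLoss_eq_of_le hnm fun _ => postWeight_eq_zero_of_le
  have hdiff : ∑ i ∈ range m, (postWeight ξ φ lam n i - postWeight ξ φ lam m i) • φ i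
      = postVec ξ φ lam m - postVec ξ φ lam n := by
    rw [postVec_eq_sub_sum_range le_rfl, postVec_eq_sub_sum_range hnm, sub_sub_sub_cancel_left,
      ← sum_sub_distrib]
    simp only [sub_smul]
  rw [hn, hdiff, ← norm_neg, neg_sub] at h
  linarith [sum_nonneg fun i (_ : i ∈ range m) =>
    mul_nonneg (hlam i).le (sq_nonneg (postWeight ξ φ lam n i - postWeight ξ φ lam m i))]

theorem cauchySeq_postVec (hlam : ∀ ℓ, 0 < lam ℓ) : CauchySeq (postVec ξ φ lam) :=
  cauchySeq_of_dist_sq_le_sub (J := fun n => ridgeLoss ξ φ lam n (postWeight ξ φ lam n))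
    ⟨0, by rintro _ ⟨n, rfl⟩; exact ridgeLoss_nonneg (fun ℓ => (hlam ℓ).le) _ _⟩
    fun n m hnm => by rw [dist_eq_norm]; exact norm_postVec_sub_sq_le hlam hnm

end Posterior

theorem posterior_cov_tendstoUniformly_general {X : Type*}
    (τ : ℝ) (κ : X → H) (hκ : ∀ y, ‖κ y‖ = τ)
    (x : X) (v : ℕ → X) (lam : ℕ → ℝ) (hlam : ∀ ℓ, 0 < lam ℓ) :
    ∃ kinf : X → ℝ,
      TendstoUniformly
        (fun n y => ⟪κ y, postVec (κ x) (fun ℓ => κ (v ℓ)) lam n⟫) kinf atTop :=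
  exists_tendstoUniformly_inner_of_cauchySeq (fun y => (hκ y).le) (cauchySeq_postVec hlam)

/-- Uniform convergence of the posterior covariances: for a stationary feature
map `κ` (constant norm `τ`), the functions `y ↦ ⟪κ y, uⁿ⟫` converge uniformly
on `X`, irrespective of the allocation of design points `v`. -/
theorem posterior_cov_tendstoUniformly {X : Type*} [Nonempty X]
    [CompleteSpace H] (τ : ℝ) (hτ : 0 < τ) (κ : X → H) (hκ : ∀ y, ‖κ y‖ = τ)
    (x : X) (v : ℕ → X) (lam : ℕ → ℝ) (hlam : ∀ ℓ, 0 < lam ℓ) :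
    ∃ kinf : X → ℝ,
      TendstoUniformly
        (fun n y => ⟪κ y, postVec (κ x) (fun ℓ => κ (v ℓ)) lam n⟫) kinf atTop :=
  posterior_cov_tendstoUniformly_general τ κ hκ x v lam hlam
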